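/- arXiv:1711.02291 — 5 statements merged into one kernel-verified Lean document; each statement's English description precedes it below -/
import Mathlib

section
/- Let {Π_i}_{i=1}^m and {Π'_j}_{j=1}^n be two complete families of nonzero orthogonal projectors on ℂ^d (i.e., Π_i = Π_i†, Π_iΠ_j = δ_{ij}Π_i, ∑_i Π_i = I, and likewise for the primed family). If the associated dephasing superoperators coincide, i.e., ∑_{i=1}^m Π_i X Π_i = ∑_{j=1}^n Π'_j X Π'_j for every d×d complex matrix X, then the two families coincide as sets: {Π_1,…,Π_m} = {Π'_1,…,Π'_n}. -/
open Matrix BigOperators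

/-!
Each `P i` is fixed by `D_P = D_Q`, and a fixed point of `D_Q` commutes with every `Q j`, so the
two families commute. For `j ≠ j'` the element `x = P i Q j y P i Q j'` then satisfies
`D_P x = x` but `D_Q x = 0`, so `P i Q j y P i Q j' = 0` for all `y`. The matrix ring is prime,
so at most one product `P i Q j` is nonzero; as `∑ j, P i Q j = P i ≠ 0`, exactly one is, and it
equals `P i`. By symmetry it also equals `Q j P i = Q j`.
-/

def IsPrimeRing (R : Type*) [Mul R] [Zero R] : Prop :=
  ∀ a b : R, (∀ y, a * y * b = 0) → a = 0 ∨ b = 0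

theorem IsSimpleRing.isPrimeRing (R : Type*) [Ring R] [IsSimpleRing R] : IsPrimeRing R := by
  intro a b h
  refine or_iff_not_imp_left.2 fun ha ↦ ?_
  let annihilator : TwoSidedIdeal R := .mk' {x | ∀ y, x * y * b = 0}
    (by simp) (fun hx hy z ↦ by simp [add_mul, hx z, hy z]) (fun hx z ↦ by simp [hx z])
    (fun {x y} hy z ↦ by rw [mul_assoc x y z, mul_assoc x, hy z, mul_zero])
    (fun {x y} hx z ↦ by rw [mul_assoc x y z]; exact hx _)
  have hone := one_mem_of_ne_zero_mem annihilator ha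
    ((TwoSidedIdeal.mem_mk' _ _ _ _ _ _ a).2 h)
  simpa using (TwoSidedIdeal.mem_mk' _ _ _ _ _ _ 1).1 hone 1

theorem Matrix.isPrimeRing (ι A : Type*) [Fintype ι] [DecidableEq ι] [Ring A] [IsSimpleRing A] :
    IsPrimeRing (Matrix ι ι A) := by
  cases isEmpty_or_nonempty ι
  · exact fun a _ _ ↦ .inl (Subsingleton.elim a 0)
  · exact IsSimpleRing.isPrimeRing (Matrix ι ι A)

section Dephasing

variable {R ι κ : Type*} [Semiring R] [Fintype ι] [Fintype κ] {e : ι → R} {f : κ → R}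

def dephasing (e : ι → R) (x : R) : R :=
  ∑ i, e i * x * e i

namespace OrthogonalIdempotents

theorem mul_dephasing (he : OrthogonalIdempotents e) (k : ι) (x : R) :
    e k * dephasing e x = e k * x * e k := by
  classical
  simp [dephasing, Finset.mul_sum, ← mul_assoc, he.mul_eq]

theorem dephasing_mul (he : OrthogonalIdempotents e) (k : ι) (x : R) :
    dephasing e x * e k = e k * x * e k := by
  classical
  simp [dephasing, Finset.sum_mul, mul_assoc, he.mul_eq]

theorem commute_of_dephasing_eq_self (he : OrthogonalIdempotents e) {x : R}
    (hx : dephasing e x = x) (k : ι) : Commute (e k) x :=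
  calc e k * x = e k * x * e k := by rw [← he.mul_dephasing, hx]
    _ = x * e k := by rw [← he.dephasing_mul, hx]

theorem dephasing_eq_ite [DecidableEq ι] (he : OrthogonalIdempotents e) {x : R} {k k' : ι}
    (hl : e k * x = x) (hr : x * e k' = x) : dephasing e x = if k = k' then x else 0 := by
  have hterm (i : ι) : e i * x * e i = (e i * e k) * x * (e k' * e i) := by
    conv_lhs => rw [← hl, ← hr]
    simp only [mul_assoc]
  simp only [dephasing, hterm, he.mul_eq]
  split_ifs with h
  · subst h; simp [hl, hr]
  · simp [Ne.symm h]

theorem dephasing_apply_self (he : OrthogonalIdempotents e) (k : ι) :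
    dephasing e (e k) = e k := by
  classical
  simpa using he.dephasing_eq_ite (he.idem k).eq (he.idem k).eq

end OrthogonalIdempotents

theorem commute_of_dephasing_eq (he : OrthogonalIdempotents e) (hf : OrthogonalIdempotents f)
    (hef : dephasing e = dephasing f) (i : ι) (j : κ) : Commute (e i) (f j) :=
  (hf.commute_of_dephasing_eq_self (hef ▸ he.dephasing_apply_self i) j).symm

theorem mul_mul_mul_eq_zero_of_dephasing_eq (he : OrthogonalIdempotents e)
    (hf : OrthogonalIdempotents f) (hef : dephasing e = dephasing f) (i : ι) {j j' : κ}
    (hjj' : j ≠ j') (y : R) : e i * f j * y * (e i * f j') = 0 := by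
  classical
  have hcomm := commute_of_dephasing_eq he hf hef
  set x := e i * f j * y * (e i * f j')
  have hx : dephasing e x = x := by
    refine (he.dephasing_eq_ite (k := i) (k' := i) ?_ ?_).trans (if_pos rfl)
    · simp only [x, ← mul_assoc, (he.idem i).eq]
    · simp only [x, mul_assoc, (hcomm i j').eq, (he.idem i).eq]
  have hx' : dephasing f x = 0 := by
    refine (hf.dephasing_eq_ite (k := j) (k' := j') ?_ ?_).trans (if_neg hjj')
    · simp only [x, ← mul_assoc, (hcomm i j).eq, (hf.idem j).eq]
    · simp only [x, mul_assoc, (hf.idem j').eq]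
  rw [← hx, hef, hx']

theorem mul_eq_left_of_dephasing_eq (he : OrthogonalIdempotents e)
    (hf : CompleteOrthogonalIdempotents f) (hR : IsPrimeRing R)
    (hef : dephasing e = dephasing f) {i : ι} {j : κ} (hne : e i * f j ≠ 0) :
    e i * f j = e i := by
  have hzero (j' : κ) (hj' : j' ≠ j) : e i * f j' = 0 :=
    (hR _ _ (mul_mul_mul_eq_zero_of_dephasing_eq he hf.1 hef i hj'.symm)).resolve_left hne
  calc e i * f j = ∑ j', e i * f j' :=
        (Finset.sum_eq_single j (fun j' _ ↦ hzero j') (by simp)).symm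
    _ = e i := by rw [← Finset.mul_sum, hf.complete, mul_one]

theorem eq_of_mul_ne_zero_of_dephasing_eq (he : CompleteOrthogonalIdempotents e)
    (hf : CompleteOrthogonalIdempotents f) (hR : IsPrimeRing R)
    (hef : dephasing e = dephasing f) {i : ι} {j : κ} (hne : e i * f j ≠ 0) : e i = f j := by
  have hcomm := commute_of_dephasing_eq he.1 hf.1 hef i j
  calc e i = e i * f j := (mul_eq_left_of_dephasing_eq he.1 hf hR hef hne).symm
    _ = f j * e i := hcomm.eq
    _ = f j := mul_eq_left_of_dephasing_eq hf.1 he hR hef.symm (hcomm.eq ▸ hne)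

theorem range_subset_of_dephasing_eq (he : CompleteOrthogonalIdempotents e)
    (hf : CompleteOrthogonalIdempotents f) (hR : IsPrimeRing R)
    (hef : dephasing e = dephasing f) (hne : ∀ i, e i ≠ 0) : Set.range e ⊆ Set.range f := by
  rintro _ ⟨i, rfl⟩
  obtain ⟨j, hj⟩ : ∃ j, e i * f j ≠ 0 := by
    by_contra! h
    apply hne i
    rw [← mul_one (e i), ← hf.complete, Finset.mul_sum]
    exact Finset.sum_eq_zero fun j _ ↦ h j
  exact ⟨j, (eq_of_mul_ne_zero_of_dephasing_eq he hf hR hef hj).symm⟩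

theorem range_eq_of_dephasing_eq (he : CompleteOrthogonalIdempotents e)
    (hf : CompleteOrthogonalIdempotents f) (hR : IsPrimeRing R)
    (hef : dephasing e = dephasing f) (hne : ∀ i, e i ≠ 0) (hfne : ∀ j, f j ≠ 0) :
    Set.range e = Set.range f :=
  (range_subset_of_dephasing_eq he hf hR hef hne).antisymm
    (range_subset_of_dephasing_eq hf he hR hef.symm hfne)

end Dephasing

theorem dephasing_projector_family_unique_general {d m n : ℕ}
    (P : Fin m → Matrix (Fin d) (Fin d) ℂ)
    (Q : Fin n → Matrix (Fin d) (Fin d) ℂ)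
    (hPne : ∀ i, P i ≠ 0)
    (hPorth : ∀ i j, P i * P j = if i = j then P i else 0)
    (hPsum : ∑ i, P i = 1)
    (hQne : ∀ j, Q j ≠ 0)
    (hQorth : ∀ i j, Q i * Q j = if i = j then Q i else 0)
    (hQsum : ∑ j, Q j = 1)
    (hDeq : ∀ X : Matrix (Fin d) (Fin d) ℂ,
      ∑ i, P i * X * P i = ∑ j, Q j * X * Q j) :
    Set.range P = Set.range Q :=
  range_eq_of_dephasing_eq ⟨OrthogonalIdempotents.iff_mul_eq.2 hPorth, hPsum⟩
    ⟨OrthogonalIdempotents.iff_mul_eq.2 hQorth, hQsum⟩ (Matrix.isPrimeRing _ _) (funext hDeq)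
    hPne hQne

/-- **Uniqueness of the projector family of a dephasing channel.**
If two complete families of nonzero orthogonal projectors on `ℂ^d` induce the same
dephasing superoperator `X ↦ ∑ i, Π i * X * Π i`, then they coincide as sets. -/
theorem dephasing_projector_family_unique {d m n : ℕ}
    (P : Fin m → Matrix (Fin d) (Fin d) ℂ)
    (Q : Fin n → Matrix (Fin d) (Fin d) ℂ)
    (hPne : ∀ i, P i ≠ 0)
    (hPherm : ∀ i, (P i)ᴴ = P i)
    (hPorth : ∀ i j, P i * P j = if i = j then P i else 0)
    (hPsum : ∑ i, P i = 1)
    (hQne : ∀ j, Q j ≠ 0)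
    (hQherm : ∀ j, (Q j)ᴴ = Q j)
    (hQorth : ∀ i j, Q i * Q j = if i = j then Q i else 0)
    (hQsum : ∑ j, Q j = 1)
    (hDeq : ∀ X : Matrix (Fin d) (Fin d) ℂ,
      ∑ i, P i * X * P i = ∑ j, Q j * X * Q j) :
    Set.range P = Set.range Q :=
  dephasing_projector_family_unique_general P Q hPne hPorth hPsum hQne hQorth hQsum hDeq
end

section
/- Let E be a linear map on d×d complex matrices that is unital (E(I) = I) and normal with respect to the Hilbert–Schmidt inner product (E ∘ E* = E* ∘ E, where E* is the Hilbert–Schmidt adjoint of E). Then ∑_{i=1}^d ( ⟨E(P_i), E(P_i)⟩ − ⟨D_B(E(P_i)), D_B(E(P_i))⟩ ) = (1/2) ∑_{i,j=1}^d ‖ (E∘D_B − D_B∘E)(|i⟩⟨j|) ‖_F², where ‖·‖_F is the Frobenius norm; that is, the (unnormalized) 2-norm coherence generating power of E equals half the squared Hilbert–Schmidt norm of the commutator [E, D_B]. -/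
open Matrix BigOperators

/-- The rank-one operator `|v i⟩⟨v j|`. -/
noncomputable def ketBra {d : ℕ} (v : Fin d → (Fin d → ℂ)) (i j : Fin d) :
    Matrix (Fin d) (Fin d) ℂ :=
  Matrix.vecMulVec (v i) (star (v j))

/-- The dephasing superoperator `D_B(X) = ∑ i, P_i X P_i`, `P_i = |v i⟩⟨v i|`. -/
noncomputable def dephase {d : ℕ} (v : Fin d → (Fin d → ℂ))
    (X : Matrix (Fin d) (Fin d) ℂ) : Matrix (Fin d) (Fin d) ℂ :=
  ∑ i, ketBra v i i * X * ketBra v i i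

/-!
For `Y = E |i⟩⟨j|` the commutator applied to `|i⟩⟨j|` is `Y - D_B Y` when `i = j` and `-D_B Y`
otherwise. Since `D_B` is an orthogonal projection, the diagonal terms contribute
`‖E P_i‖² - ‖D_B(E P_i)‖²` by Pythagoras, so it remains to show
`∑_{i,j} ‖D_B(E |i⟩⟨j|)‖² = ∑_k ‖E P_k‖²`. The coefficient `⟨P_k, E |i⟩⟨j|⟩` equals
`⟨E* P_k, |i⟩⟨j|⟩`, so by Parseval in the basis `|i⟩⟨j|` the left side is `∑_k ‖E* P_k‖²`, and
normality gives `‖E* X‖² = ⟨X, E E* X⟩ = ⟨X, E* E X⟩ = ‖E X‖²`.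
-/

-- The Hilbert–Schmidt inner product, abbreviated `hs` in lemma names.
local notation "⟪" X ", " Y "⟫" => Matrix.trace (Matrix.conjTranspose X * Y)

section HilbertSchmidt

variable {n : Type*} [Fintype n]

lemma star_hs (X Y : Matrix n n ℂ) : star ⟪X, Y⟫ = ⟪Y, X⟫ := by
  rw [← trace_conjTranspose, conjTranspose_mul, conjTranspose_conjTranspose]

lemma sum_sum_norm_sq_eq_hs (C : Matrix n n ℂ) :
    ∑ a, ∑ b, (‖C a b‖ : ℂ) ^ 2 = ⟪C, C⟫ := by
  simp only [trace, diag_apply, mul_apply, conjTranspose_apply, ← Complex.conj_mul']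
  exact Finset.sum_comm

lemma hs_adjoint_apply_self_of_normal {E Estar : Matrix n n ℂ → Matrix n n ℂ}
    (hadj : ∀ X Y, ⟪Estar X, Y⟫ = ⟪X, E Y⟫) (hnormal : ∀ X, E (Estar X) = Estar (E X))
    (X : Matrix n n ℂ) : ⟪Estar X, Estar X⟫ = ⟪E X, E X⟫ :=
  calc ⟪Estar X, Estar X⟫ = ⟪X, Estar (E X)⟫ := by rw [hadj, hnormal]
    _ = ⟪E X, E X⟫ := by rw [← star_hs, hadj, star_hs]

end HilbertSchmidt

section KetBra

variable {d : ℕ} (v : Fin d → Fin d → ℂ)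

lemma conjTranspose_ketBra (i j : Fin d) : (ketBra v i j)ᴴ = ketBra v j i := by
  simp [ketBra]

lemma ketBra_mul_ketBra (i j k l : Fin d) :
    ketBra v i j * ketBra v k l = (star (v j) ⬝ᵥ v k) • ketBra v i l := by
  simp only [ketBra, vecMulVec_mul_vecMulVec, vecMulVec_smul]

lemma ketBra_mul_mul_ketBra (A : Matrix (Fin d) (Fin d) ℂ) (i j : Fin d) :
    ketBra v i i * A * ketBra v j j = ⟪ketBra v i j, A⟫ • ketBra v i j := by
  have hcoeff : ⟪ketBra v i j, A⟫ = star (v i) ᵥ* A ⬝ᵥ v j := by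
    rw [conjTranspose_ketBra, ketBra, vecMulVec_mul, trace_vecMulVec, dotProduct_comm]
  rw [hcoeff, ketBra, vecMulVec_mul, ketBra, vecMulVec_mul_vecMulVec, vecMulVec_smul, ketBra]

lemma dephase_eq_sum_smul (X : Matrix (Fin d) (Fin d) ℂ) :
    dephase v X = ∑ k, ⟪ketBra v k k, X⟫ • ketBra v k k :=
  Finset.sum_congr rfl fun k _ => ketBra_mul_mul_ketBra v X k k

lemma hs_dephase_left (X Y : Matrix (Fin d) (Fin d) ℂ) :
    ⟪dephase v X, Y⟫ = ⟪X, dephase v Y⟫ := by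
  simp only [dephase, conjTranspose_sum, conjTranspose_mul, conjTranspose_ketBra, Finset.sum_mul,
    Finset.mul_sum, trace_sum, Matrix.mul_assoc]
  exact Finset.sum_congr rfl fun k _ => by rw [trace_mul_comm, Matrix.mul_assoc, Matrix.mul_assoc]

lemma hs_self_dephase_eq_sum (X : Matrix (Fin d) (Fin d) ℂ) :
    ⟪X, dephase v X⟫ = ∑ k, ⟪ketBra v k k, X⟫ * star ⟪ketBra v k k, X⟫ := by
  simp only [dephase_eq_sum_smul, Matrix.mul_sum, trace_sum, Matrix.mul_smul, trace_smul,
    smul_eq_mul, star_hs]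

end KetBra

section Orthonormal

variable {d : ℕ} {v : Fin d → Fin d → ℂ}

lemma ketBra_mul_ketBra_of_orthonormal
    (hv : ∀ i j, star (v i) ⬝ᵥ v j = if i = j then 1 else 0) (i j k l : Fin d) :
    ketBra v i j * ketBra v k l = if j = k then ketBra v i l else 0 := by
  rw [ketBra_mul_ketBra, hv]
  split_ifs <;> simp

lemma sum_ketBra_self (hv : ∀ i j, star (v i) ⬝ᵥ v j = if i = j then 1 else 0) :
    ∑ i, ketBra v i i = 1 := by
  -- `hv` says `Uᴴ * U = 1` for the matrix `U` with columns `v i`; the claim is `U * Uᴴ = 1`.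
  let U : Matrix (Fin d) (Fin d) ℂ := of fun k i => v i k
  have hU : U * Uᴴ = 1 := by
    rw [mul_eq_one_comm]
    ext i j
    simpa [U, mul_apply, dotProduct, one_apply, mul_comm] using hv i j
  ext a b
  rw [← hU]
  simp [U, Matrix.sum_apply, ketBra, vecMulVec_apply, mul_apply]

lemma hs_self_eq_sum_ketBra (hv : ∀ i j, star (v i) ⬝ᵥ v j = if i = j then 1 else 0)
    (A : Matrix (Fin d) (Fin d) ℂ) :
    ⟪A, A⟫ = ∑ i, ∑ j, ⟪ketBra v i j, A⟫ * star ⟪ketBra v i j, A⟫ := by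
  calc ⟪A, A⟫ = ⟪A, (∑ i, ketBra v i i) * A * ∑ j, ketBra v j j⟫ := by
        rw [sum_ketBra_self hv, Matrix.one_mul, Matrix.mul_one]
    _ = _ := by
        simp only [Finset.sum_mul, Finset.mul_sum, trace_sum, ketBra_mul_mul_ketBra,
          Matrix.mul_smul, trace_smul, smul_eq_mul, star_hs]
        exact Finset.sum_comm

lemma dephase_ketBra (hv : ∀ i j, star (v i) ⬝ᵥ v j = if i = j then 1 else 0) (i j : Fin d) :
    dephase v (ketBra v i j) = if i = j then ketBra v i i else 0 := by
  simp [dephase, ketBra_mul_ketBra_of_orthonormal hv, ite_mul, eq_comm]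

lemma dephase_dephase (hv : ∀ i j, star (v i) ⬝ᵥ v j = if i = j then 1 else 0)
    (X : Matrix (Fin d) (Fin d) ℂ) : dephase v (dephase v X) = dephase v X := by
  conv_lhs => rw [dephase_eq_sum_smul]
  simp only [← hs_dephase_left, dephase_ketBra hv, if_true]
  rw [dephase_eq_sum_smul]

lemma hs_sub_dephase_self (hv : ∀ i j, star (v i) ⬝ᵥ v j = if i = j then 1 else 0)
    (X : Matrix (Fin d) (Fin d) ℂ) :
    ⟪X - dephase v X, X - dephase v X⟫ = ⟪X, X⟫ - ⟪dephase v X, dephase v X⟫ := by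
  simp only [conjTranspose_sub, Matrix.sub_mul, Matrix.mul_sub, trace_sub, hs_dephase_left,
    dephase_dephase hv]
  ring

lemma hs_commutator_dephase_ketBra (hv : ∀ i j, star (v i) ⬝ᵥ v j = if i = j then 1 else 0)
    (E : Matrix (Fin d) (Fin d) ℂ →ₗ[ℂ] Matrix (Fin d) (Fin d) ℂ) (i j : Fin d) :
    ⟪E (dephase v (ketBra v i j)) - dephase v (E (ketBra v i j)),
        E (dephase v (ketBra v i j)) - dephase v (E (ketBra v i j))⟫ =
      (if i = j then ⟪E (ketBra v i i), E (ketBra v i i)⟫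
          - 2 * ⟪dephase v (E (ketBra v i i)), dephase v (E (ketBra v i i))⟫ else 0)
        + ⟪dephase v (E (ketBra v i j)), dephase v (E (ketBra v i j))⟫ := by
  rw [dephase_ketBra hv]
  split_ifs with hij
  · subst hij
    rw [hs_sub_dephase_self hv]
    ring
  · simp

lemma sum_hs_dephase_apply_ketBra (hv : ∀ i j, star (v i) ⬝ᵥ v j = if i = j then 1 else 0)
    {E Estar : Matrix (Fin d) (Fin d) ℂ → Matrix (Fin d) (Fin d) ℂ}
    (hadj : ∀ X Y, ⟪Estar X, Y⟫ = ⟪X, E Y⟫) :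
    ∑ i, ∑ j, ⟪dephase v (E (ketBra v i j)), dephase v (E (ketBra v i j))⟫ =
      ∑ k, ⟪Estar (ketBra v k k), Estar (ketBra v k k)⟫ := by
  have hcoeff : ∀ i j k,
      ⟪ketBra v k k, E (ketBra v i j)⟫ = star ⟪ketBra v i j, Estar (ketBra v k k)⟫ := by
    intro i j k
    rw [← hadj, star_hs]
  simp only [hs_dephase_left, dephase_dephase hv, hs_self_dephase_eq_sum, hcoeff, star_star,
    hs_self_eq_sum_ketBra hv (Estar _), mul_comm (star _)]
  exact Finset.sum_comm_cycle

end Orthonormal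

theorem cgp_unital_normal_eq_commutator_general {d : ℕ}
    (v : Fin d → (Fin d → ℂ))
    (hv : ∀ i j, star (v i) ⬝ᵥ v j = if i = j then 1 else 0)
    (E Estar : Matrix (Fin d) (Fin d) ℂ →ₗ[ℂ] Matrix (Fin d) (Fin d) ℂ)
    (hadj : ∀ X Y : Matrix (Fin d) (Fin d) ℂ,
      ((Estar X)ᴴ * Y).trace = (Xᴴ * E Y).trace)
    (hnormal : ∀ X : Matrix (Fin d) (Fin d) ℂ, E (Estar X) = Estar (E X)) :
    ∑ i, (((E (ketBra v i i))ᴴ * E (ketBra v i i)).trace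
        - ((dephase v (E (ketBra v i i)))ᴴ * dephase v (E (ketBra v i i))).trace)
      = (((1 / 2 : ℝ) * ∑ i, ∑ j, ∑ a, ∑ b,
          ‖(E (dephase v (ketBra v i j)) - dephase v (E (ketBra v i j))) a b‖ ^ 2 : ℝ) : ℂ) := by
  have hsum : ∑ i, ∑ j, ⟪dephase v (E (ketBra v i j)), dephase v (E (ketBra v i j))⟫ =
      ∑ k, ⟪E (ketBra v k k), E (ketBra v k k)⟫ := by
    rw [sum_hs_dephase_apply_ketBra hv hadj]
    exact Finset.sum_congr rfl fun k _ => hs_adjoint_apply_self_of_normal hadj hnormal _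
  push_cast
  simp only [sum_sum_norm_sq_eq_hs, hs_commutator_dephase_ketBra hv, Finset.sum_add_distrib,
    Finset.sum_ite_eq, Finset.mem_univ, if_true, hsum, Finset.sum_sub_distrib, ← Finset.mul_sum]
  ring

/-- **2-norm CGP as a commutator for unital normal maps.**
Let `E` be a linear map on `d × d` complex matrices, unital (`E 1 = 1`) and normal with
respect to the Hilbert–Schmidt inner product `⟨X,Y⟩ = Tr(XᴴY)` (i.e. `E` commutes with its
Hilbert–Schmidt adjoint `E*`).  Then
`∑ i (⟨E P_i, E P_i⟩ − ⟨D_B(E P_i), D_B(E P_i)⟩)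
  = ½ ∑_{i,j} ‖(E ∘ D_B − D_B ∘ E)(|i⟩⟨j|)‖_F²`. -/
theorem cgp_unital_normal_eq_commutator {d : ℕ}
    (v : Fin d → (Fin d → ℂ))
    (hv : ∀ i j, star (v i) ⬝ᵥ v j = if i = j then 1 else 0)
    (E Estar : Matrix (Fin d) (Fin d) ℂ →ₗ[ℂ] Matrix (Fin d) (Fin d) ℂ)
    (hE_unital : E 1 = 1)
    (hadj : ∀ X Y : Matrix (Fin d) (Fin d) ℂ,
      ((Estar X)ᴴ * Y).trace = (Xᴴ * E Y).trace)
    (hnormal : ∀ X : Matrix (Fin d) (Fin d) ℂ, E (Estar X) = Estar (E X)) :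
    ∑ i, (((E (ketBra v i i))ᴴ * E (ketBra v i i)).trace
        - ((dephase v (E (ketBra v i i)))ᴴ * dephase v (E (ketBra v i i))).trace)
      = (((1 / 2 : ℝ) * ∑ i, ∑ j, ∑ a, ∑ b,
          ‖(E (dephase v (ketBra v i j)) - dephase v (E (ketBra v i j))) a b‖ ^ 2 : ℝ) : ℂ) :=
  cgp_unital_normal_eq_commutator_general v hv E Estar hadj hnormal
end

section
/- Let A be a d×d real matrix that is positive semidefinite and doubly stochastic (all entries nonnegative and every row and column sums to 1). Then Tr[ A ( I − A ) ] ≤ (d−1)/4. -/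
open Matrix BigOperators Finset

/-!
Write `T = tr A` and `S = ∑ᵢⱼ Aᵢⱼ²`, so that `tr (A (1 - A)) = T - S` for symmetric `A`.
The rows of the centred matrix `Aᵢⱼ - 1/d` sum to zero, so by Cauchy–Schwarz each diagonal entry
is controlled by the rest of its row: `d (Aᵢᵢ - 1/d)² ≤ (d - 1) ∑ⱼ (Aᵢⱼ - 1/d)²`. Combined with
Cauchy–Schwarz along the diagonal this gives `(T - 1)² ≤ (d - 1)(S - 1)`, and then
`T - S = (T - 1) - (S - 1) ≤ (d - 1)/4` by AM–GM.
-/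

theorem sub_le_div_four_of_sq_le_mul {x y m : ℝ} (hm : 0 ≤ m) (hy : 0 ≤ y)
    (h : x ^ 2 ≤ m * y) : x - y ≤ m / 4 := by
  nlinarith [sq_nonneg (y - m / 4)]

variable {n : Type*} [Fintype n]

theorem card_mul_sq_le_of_sum_eq_zero {f : n → ℝ} (hf : ∑ j, f j = 0) (i : n) :
    (Fintype.card n : ℝ) * f i ^ 2 ≤ (Fintype.card n - 1) * ∑ j, f j ^ 2 := by
  classical
  have hrest : ∑ j ∈ univ.erase i, f j = -f i := by
    linarith [add_sum_erase univ f (mem_univ i)]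
  have hcard : ((univ.erase i).card : ℝ) = Fintype.card n - 1 := by
    rw [card_erase_of_mem (mem_univ i), card_univ, Nat.cast_pred (Fintype.card_pos_iff.mpr ⟨i⟩)]
  have hcs : f i ^ 2 ≤ (Fintype.card n - 1) * ∑ j ∈ univ.erase i, f j ^ 2 := by
    have := sq_sum_le_card_mul_sum_sq (s := univ.erase i) (f := f)
    rwa [hrest, hcard, neg_sq] at this
  rw [← add_sum_erase univ _ (mem_univ i)]
  linarith

namespace Matrix

theorem trace_mul_one_sub_of_isSymm [DecidableEq n] {A : Matrix n n ℝ} (hA : A.IsSymm) :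
    (A * (1 - A)).trace = A.trace - ∑ i, ∑ j, A i j ^ 2 := by
  rw [mul_sub, mul_one, trace_sub]
  congr 1
  simp only [trace, diag, mul_apply, sq]
  refine sum_congr rfl fun i _ => sum_congr rfl fun j _ => ?_
  rw [hA.apply i j]

variable [Nonempty n] {A : Matrix n n ℝ}

theorem sum_sq_sub_inv_card_of_sum_row_eq_one (hrow : ∀ i, ∑ j, A i j = 1) :
    ∑ i, ∑ j, (A i j - (Fintype.card n : ℝ)⁻¹) ^ 2 = ∑ i, ∑ j, A i j ^ 2 - 1 := by
  have hcard : (Fintype.card n : ℝ) ≠ 0 := Nat.cast_ne_zero.mpr Fintype.card_ne_zero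
  simp only [sub_sq, sum_add_distrib, sum_sub_distrib, ← sum_mul, ← mul_sum, hrow, sum_const,
    card_univ, nsmul_eq_mul]
  field_simp
  ring

theorem sq_trace_sub_one_le_of_sum_row_eq_one (hrow : ∀ i, ∑ j, A i j = 1) :
    (A.trace - 1) ^ 2 ≤ (Fintype.card n - 1) * (∑ i, ∑ j, A i j ^ 2 - 1) := by
  set c := (Fintype.card n : ℝ)⁻¹
  have hc : (Fintype.card n : ℝ) * c = 1 :=
    mul_inv_cancel₀ (Nat.cast_ne_zero.mpr Fintype.card_ne_zero)
  have hcentered : ∀ i, ∑ j, (A i j - c) = 0 := fun i => by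
    simp [sum_sub_distrib, hrow, hc]
  calc (A.trace - 1) ^ 2 = (∑ i, (A i i - c)) ^ 2 := by
        simp [trace, sum_sub_distrib, hc]
    _ ≤ Fintype.card n * ∑ i, (A i i - c) ^ 2 := by
        simpa using sq_sum_le_card_mul_sum_sq (s := univ) (f := fun i => A i i - c)
    _ ≤ ∑ i, (Fintype.card n - 1) * ∑ j, (A i j - c) ^ 2 := by
        rw [mul_sum]
        exact sum_le_sum fun i _ => card_mul_sq_le_of_sum_eq_zero (hcentered i) i
    _ = (Fintype.card n - 1) * (∑ i, ∑ j, A i j ^ 2 - 1) := by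
        rw [← mul_sum, sum_sq_sub_inv_card_of_sum_row_eq_one hrow]

theorem trace_mul_one_sub_le_of_isSymm [DecidableEq n] (hrow : ∀ i, ∑ j, A i j = 1)
    (hA : A.IsSymm) : (A * (1 - A)).trace ≤ ((Fintype.card n : ℝ) - 1) / 4 := by
  rw [trace_mul_one_sub_of_isSymm hA, ← sub_sub_sub_cancel_right _ _ 1]
  refine sub_le_div_four_of_sq_le_mul (sub_nonneg.mpr (mod_cast Fintype.card_pos)) ?_
    (sq_trace_sub_one_le_of_sum_row_eq_one hrow)
  rw [← sum_sq_sub_inv_card_of_sum_row_eq_one hrow]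
  positivity

end Matrix

theorem trace_le_of_posSemidef_doublyStochastic_general {d : ℕ} (hd : 0 < d)
    (A : Matrix (Fin d) (Fin d) ℝ)
    (hpsd : A.PosSemidef)
    (hrow : ∀ i, ∑ j, A i j = 1) :
    (A * (1 - A)).trace ≤ ((d : ℝ) - 1) / 4 := by
  have : Nonempty (Fin d) := Fin.pos_iff_nonempty.mp hd
  simpa using trace_mul_one_sub_le_of_isSymm hrow (isHermitian_iff_isSymm.mp hpsd.isHermitian)

/-- **A trace bound for positive semidefinite doubly stochastic matrices.**
If `A` is a `d × d` real matrix which is positive semidefinite and doubly stochastic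
(nonnegative entries, all row sums and column sums equal to `1`), then
`Tr[A(I − A)] ≤ (d − 1)/4`. -/
theorem trace_le_of_posSemidef_doublyStochastic {d : ℕ} (hd : 0 < d)
    (A : Matrix (Fin d) (Fin d) ℝ)
    (hpsd : A.PosSemidef)
    (hnonneg : ∀ i j, 0 ≤ A i j)
    (hrow : ∀ i, ∑ j, A i j = 1)
    (hcol : ∀ j, ∑ i, A i j = 1) :
    (A * (1 - A)).trace ≤ ((d : ℝ) - 1) / 4 :=
  trace_le_of_posSemidef_doublyStochastic_general hd A hpsd hrow
end

section
/- Let d ≥ 2, let F be the d×d matrix with entries F_{jk} = (1/√d) exp( i·2π(j−1)(k−1)/d ) (indices j,k = 1,…,d), and set f_k = (k−1)(k−2) if d is odd and f_k = (k−1)² if d is even. Define the unitary matrix U = F · diag( exp(−iπ f_1/d), …, exp(−iπ f_d/d) ) · F†. Then |⟨i|U|j⟩|² = 1/d for every pair of indices i, j. (Equivalently, the generalized quadratic Gauss sums |∑_{k=0}^{d−1} exp( i·(2π/d)·k·(j−i) ) · exp( i·π f_{k+1}/d )|² = d for all i, j.) -/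
open Matrix BigOperators

/-- The `d × d` quantum Fourier transform matrix
`F_{jk} = (1/√d) exp(i 2π (j−1)(k−1)/d)` (indices `1, …, d` rendered as `Fin d`). -/
noncomputable def qft (d : ℕ) : Matrix (Fin d) (Fin d) ℂ :=
  Matrix.of fun j k => (1 / (Real.sqrt d : ℂ))
    * Complex.exp (Complex.I * 2 * Real.pi * (j.val : ℂ) * (k.val : ℂ) / d)

/-- The phase exponents `f_k = (k−1)(k−2)` for `d` odd and `f_k = (k−1)²` for `d` even
(with `k = 1, …, d` rendered as `Fin d`, so `k − 1` is `k.val`). -/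
def fPhase (d : ℕ) (k : Fin d) : ℕ :=
  if d % 2 = 1 then k.val * (k.val - 1) else k.val ^ 2

/-!
Put `c(n) = exp(-iπ f(n)/d)`. The exponent satisfies `f(m + n) = f(m) + f(n) + 2mn`, and the
parity-dependent choice of `f` makes `f(d)` divisible by `2d`; hence `c` is well defined on
`ZMod d` and `c(x + y) ψ(xy) = c(x) c(y)` for the standard character `ψ(x) = exp(2πi x/d)`.
The entry `⟨i|U|j⟩` is `(1/d) ∑ₓ ψ((i - j)x) c(x)`, and for any unimodular `c` with this property,
expanding `|∑ c|²` and substituting `y ↦ x + y` leaves `∑_y c(y) ∑ₓ ψ(-xy) = d c(0) = d`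
by orthogonality of characters.
-/

open Complex Finset

namespace AddChar

variable {R : Type*} [CommRing R] [Fintype R] {ψ : AddChar R ℂ}

theorem norm_sq_sum_eq_card_of_map_add_mul (hψ : ψ.IsPrimitive) {c : R → ℂ}
    (hc : ∀ x, ‖c x‖ = 1) (hadd : ∀ x y, c (x + y) * ψ (x * y) = c x * c y) :
    ‖∑ x, c x‖ ^ 2 = Fintype.card R := by
  classical
  have hc_zero : c 0 = 1 := by
    have h := hadd 0 0
    rw [add_zero, mul_zero, map_zero_eq_one, mul_one] at h
    exact (mul_eq_left₀ (norm_ne_zero_iff.1 (by simp [hc]))).1 h.symm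
  have hc_conj : ∀ x, starRingEnd ℂ (c x) * c x = 1 := fun x => by
    rw [mul_comm, mul_conj', hc, ofReal_one, one_pow]
  have hc_shift : ∀ x y, c (x + y) = c x * c y * ψ (x * -y) := fun x y => by
    rw [mul_neg, map_neg_eq_inv, ← hadd, mul_inv_cancel_right₀ (by simp [← norm_ne_zero_iff])]
  suffices (∑ x, c x) * starRingEnd ℂ (∑ x, c x) = Fintype.card R by
    exact_mod_cast (mul_conj' _).symm.trans this
  calc (∑ y, c y) * starRingEnd ℂ (∑ x, c x)
      = ∑ x, ∑ y, starRingEnd ℂ (c x) * c (x + y) := by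
        rw [map_sum, sum_mul_sum, sum_comm]
        refine sum_congr rfl fun x _ => ?_
        rw [← Equiv.sum_comp (Equiv.addLeft x)]
        simp only [Equiv.coe_addLeft, mul_comm]
    _ = ∑ y, c y * ∑ x, ψ (x * -y) := by
        rw [sum_comm]
        refine sum_congr rfl fun y _ => ?_
        rw [mul_sum]
        refine sum_congr rfl fun x _ => ?_
        rw [hc_shift, ← mul_assoc, ← mul_assoc, hc_conj, one_mul]
    _ = Fintype.card R := by
        simp only [sum_mulShift _ hψ, neg_eq_zero, Nat.cast_ite, Nat.cast_zero, mul_ite, mul_zero,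
          sum_ite_eq', mem_univ, if_true, hc_zero, one_mul]

theorem norm_sq_sum_mul_eq_card_of_map_add_mul (hψ : ψ.IsPrimitive) {c : R → ℂ}
    (hc : ∀ x, ‖c x‖ = 1) (hadd : ∀ x y, c (x + y) * ψ (x * y) = c x * c y) (a : R) :
    ‖∑ x, ψ (a * x) * c x‖ ^ 2 = Fintype.card R :=
  norm_sq_sum_eq_card_of_map_add_mul hψ (fun x => by rw [norm_mul, hc, ψ.norm_apply, one_mul])
    fun x y => by rw [mul_add, map_add_eq_mul, mul_assoc, hadd]; ring

end AddChar

/-- `fPhase d k = gaussExponent d k.val`, extended to all of `ℕ`. -/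
def gaussExponent (d n : ℕ) : ℕ := if d % 2 = 1 then n * (n - 1) else n ^ 2

theorem gaussExponent_add (d m n : ℕ) :
    (gaussExponent d (m + n) : ℤ) = gaussExponent d m + gaussExponent d n + 2 * m * n := by
  have hpred : ∀ k : ℕ, ((k * (k - 1) : ℕ) : ℤ) = k * (k - 1) := fun k => by
    cases k <;> simp
  unfold gaussExponent
  split_ifs
  · push_cast [hpred]; ring
  · push_cast; ring

theorem two_mul_dvd_gaussExponent_self (d : ℕ) : 2 * d ∣ gaussExponent d d := by
  unfold gaussExponent
  split_ifs with hd
  · obtain ⟨t, ht⟩ : 2 ∣ d - 1 := by omega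
    exact ⟨t, by rw [ht]; ring⟩
  · obtain ⟨t, rfl⟩ : 2 ∣ d := by omega
    exact ⟨t, by ring⟩

noncomputable def chirp (d n : ℕ) : ℂ := exp (-I * Real.pi * (gaussExponent d n : ℂ) / d)

theorem chirp_add (d m n : ℕ) :
    chirp d (m + n) * exp (2 * Real.pi * I * (m * n : ℕ) / d) = chirp d m * chirp d n := by
  have h : ((gaussExponent d (m + n) : ℕ) : ℂ)
      = gaussExponent d m + gaussExponent d n + 2 * m * n := mod_cast gaussExponent_add d m n
  simp only [chirp, ← exp_add, h]
  congr 1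
  push_cast
  ring

theorem chirp_add_self {d : ℕ} (hd : d ≠ 0) (n : ℕ) : chirp d (n + d) = chirp d n := by
  have hd' : (d : ℂ) ≠ 0 := Nat.cast_ne_zero.2 hd
  obtain ⟨t, ht⟩ := two_mul_dvd_gaussExponent_self d
  have hself : chirp d d = 1 := by
    rw [chirp, ht, show -I * Real.pi * ((2 * d * t : ℕ) : ℂ) / d = (-t : ℤ) * (2 * Real.pi * I) by
      push_cast; field_simp]
    exact exp_int_mul_two_pi_mul_I _
  have hlin : exp (2 * Real.pi * I * (n * d : ℕ) / d) = 1 := by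
    rw [show 2 * Real.pi * I * ((n * d : ℕ) : ℂ) / d = n * (2 * Real.pi * I) by
      push_cast; field_simp]
    exact exp_nat_mul_two_pi_mul_I _
  rw [← mul_one (chirp d (n + d)), ← hlin, chirp_add, hself, mul_one]

theorem chirp_mod {d : ℕ} (hd : d ≠ 0) (n : ℕ) : chirp d (n % d) = chirp d n := by
  have hperiod : ∀ r q, chirp d (r + d * q) = chirp d r := fun r q => by
    induction q with
    | zero => rfl
    | succ q ih => rw [Nat.mul_succ, ← add_assoc, chirp_add_self hd, ih]
  conv_rhs => rw [← Nat.mod_add_div n d]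
  exact (hperiod _ _).symm

theorem chirp_val_add_mul_stdAddChar {d : ℕ} [NeZero d] (x y : ZMod d) :
    chirp d (x + y).val * ZMod.stdAddChar (x * y) = chirp d x.val * chirp d y.val := by
  have hxy : x * y = ((x.val * y.val : ℕ) : ℤ) := by push_cast; simp
  rw [ZMod.val_add, chirp_mod (NeZero.ne d), hxy, ZMod.stdAddChar_coe, ← chirp_add]
  push_cast
  rfl

theorem norm_chirp (d n : ℕ) : ‖chirp d n‖ = 1 := by
  rw [chirp, norm_exp]
  simp

theorem qft_mul_star_qft_apply {d : ℕ} [NeZero d] (i j k : Fin d) :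
    qft d i k * star (qft d j k) = ZMod.stdAddChar ((((i : ℤ) - j) * k : ℤ) : ZMod d) / d := by
  have hsqrt : (Real.sqrt d : ℂ) * Real.sqrt d = d := by
    rw [← ofReal_mul, Real.mul_self_sqrt (Nat.cast_nonneg d), ofReal_natCast]
  rw [ZMod.stdAddChar_coe, qft, of_apply, of_apply, star_def, map_mul, ← exp_conj]
  simp only [conj_ofReal, map_div₀, map_one, map_mul, conj_I, map_ofNat, map_natCast]
  rw [mul_mul_mul_comm, ← exp_add, one_div_mul_one_div, hsqrt, one_div_mul_eq_div]
  congr 2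
  push_cast
  ring

theorem qft_mul_diagonal_mul_conjTranspose_qft_apply {d : ℕ} [NeZero d] (c : Fin d → ℂ)
    (i j : Fin d) :
    (qft d * diagonal c * (qft d)ᴴ) i j
      = (∑ k : Fin d, ZMod.stdAddChar ((((i : ℤ) - j) * k : ℤ) : ZMod d) * c k) / d := by
  rw [mul_apply, sum_div]
  refine sum_congr rfl fun k _ => ?_
  rw [mul_diagonal, conjTranspose_apply, mul_right_comm, qft_mul_star_qft_apply, div_mul_eq_mul_div]

theorem Fin.sum_univ_natCast_zmod {d : ℕ} [NeZero d] {M : Type*} [AddCommMonoid M]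
    (g : ZMod d → M) : ∑ k : Fin d, g (k.val : ZMod d) = ∑ x, g x := by
  refine Fintype.sum_bijective _ ((Fintype.bijective_iff_injective_and_card _).2 ⟨?_, ?_⟩) _ _
    fun _ => rfl
  · intro k l h
    have hval := congrArg ZMod.val h
    rwa [ZMod.val_natCast_of_lt k.isLt, ZMod.val_natCast_of_lt l.isLt, ← Fin.ext_iff] at hval
  · rw [Fintype.card_fin, ZMod.card]

theorem gauss_unitary_unbiased_general {d : ℕ} :
    ∀ i j : Fin d,
      ‖(qft d * Matrix.diagonal (fun k : Fin d =>
            Complex.exp ((-Complex.I) * Real.pi * (fPhase d k : ℂ) / d)) * (qft d)ᴴ) i j‖ ^ 2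
        = 1 / (d : ℝ) := by
  intro i j
  have : NeZero d := NeZero.of_pos i.pos
  have hsum : ∑ k : Fin d, ZMod.stdAddChar ((((i : ℤ) - j) * k : ℤ) : ZMod d)
        * exp (-I * Real.pi * (fPhase d k : ℂ) / d)
      = ∑ x : ZMod d, ZMod.stdAddChar ((((i : ℤ) - j : ℤ) : ZMod d) * x) * chirp d x.val := by
    rw [← Fin.sum_univ_natCast_zmod]
    refine sum_congr rfl fun k _ => ?_
    rw [ZMod.val_natCast_of_lt k.isLt]
    push_cast
    rfl
  rw [qft_mul_diagonal_mul_conjTranspose_qft_apply, hsum, norm_div, div_pow,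
    AddChar.norm_sq_sum_mul_eq_card_of_map_add_mul (ZMod.isPrimitive_stdAddChar d)
      (fun x => norm_chirp d x.val) chirp_val_add_mul_stdAddChar, ZMod.card, norm_natCast]
  field_simp

/-- **Gauss-sum unitaries are mutually unbiased with respect to the standard basis.**
Let `d ≥ 2` and `U = F · diag(exp(−iπ f_1/d), …, exp(−iπ f_d/d)) · F†`, where `F` is the
quantum Fourier transform.  Then `|⟨i|U|j⟩|² = 1/d` for all `i, j`. -/
theorem gauss_unitary_unbiased {d : ℕ} (hd : 2 ≤ d) :
    ∀ i j : Fin d,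
      ‖(qft d * Matrix.diagonal (fun k : Fin d =>
            Complex.exp ((-Complex.I) * Real.pi * (fPhase d k : ℂ) / d)) * (qft d)ᴴ) i j‖ ^ 2
        = 1 / (d : ℝ) :=
  gauss_unitary_unbiased_general
end

section
/- Let d ≥ 2 and define f : U(d) → ℝ by f(U) = (4/(d−1)) · ( Tr(X_U X_Uᵀ) − Tr((X_U X_Uᵀ)²) ), where (X_U)_{ij} = |⟨i|U|j⟩|². Then f is Lipschitz with respect to the Frobenius norm: for all d×d unitaries U, V, | f(U) − f(V) | ≤ 160 · (d/(d−1)) · ‖ U − V ‖_F, where ‖A‖_F = √(Tr(A†A)). -/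
open Matrix BigOperators

/-- The bistochastic matrix `(X_U)_{ij} = |⟨i|U|j⟩|²` of a matrix `U`, with respect to the
standard basis. -/
noncomputable def xMat {d : ℕ} (U : Matrix (Fin d) (Fin d) ℂ) : Matrix (Fin d) (Fin d) ℝ :=
  Matrix.of fun i j => ‖U i j‖ ^ 2

/-- The normalized 2-norm CGP of the maximally dephasing channel in the basis `{U|i⟩}`:
`f(U) = (4/(d−1)) (Tr(X_U X_Uᵀ) − Tr((X_U X_Uᵀ)²))`. -/
noncomputable def cgpDeph {d : ℕ} (U : Matrix (Fin d) (Fin d) ℂ) : ℝ :=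
  (4 / ((d : ℝ) - 1)) * ((xMat U * (xMat U)ᵀ).trace - ((xMat U * (xMat U)ᵀ) ^ 2).trace)

/-- The Frobenius norm `‖A‖_F = √Tr(A†A)`. -/
noncomputable def frobNorm {d : ℕ} (A : Matrix (Fin d) (Fin d) ℂ) : ℝ :=
  Real.sqrt ((Aᴴ * A).trace.re)

/-!
The matrix `X_U` is doubly stochastic, and multiplying by a doubly stochastic matrix does not
increase the entrywise `ℓ¹` norm `N`. Writing `XXᵀ - YYᵀ = (X - Y)Xᵀ + Y(X - Y)ᵀ` and
`P² - Q² = (P - Q)P + Q(P - Q)`, the map `X ↦ tr(XXᵀ) - tr((XXᵀ)²)` is therefore `6`-Lipschitz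
for `N` on doubly stochastic matrices. Finally `N(X_U - X_V) ≤ 2 ∑ᵢⱼ |Uᵢⱼ - Vᵢⱼ| ≤ 2d ‖U - V‖_F`
because the entries of a unitary are bounded by `1`, and by Cauchy–Schwarz; this gives the
constant `48 d/(d-1)`.
-/

section EntrywiseL1

variable {m n : Type*} [Fintype m] [Fintype n]

def entrywiseL1 (A : Matrix m n ℝ) : ℝ := ∑ i, ∑ j, |A i j|

lemma entrywiseL1_add_le (A B : Matrix m n ℝ) :
    entrywiseL1 (A + B) ≤ entrywiseL1 A + entrywiseL1 B := by
  simp only [entrywiseL1, Matrix.add_apply, ← Finset.sum_add_distrib]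
  gcongr
  exact abs_add_le _ _

lemma entrywiseL1_transpose (A : Matrix m n ℝ) : entrywiseL1 Aᵀ = entrywiseL1 A :=
  Finset.sum_comm

lemma abs_trace_le_entrywiseL1 (A : Matrix n n ℝ) : |A.trace| ≤ entrywiseL1 A :=
  (Finset.abs_sum_le_sum_abs _ _).trans <| Finset.sum_le_sum fun i _ =>
    Finset.single_le_sum (f := fun j => |A i j|) (fun _ _ => abs_nonneg _) (Finset.mem_univ i)

variable [DecidableEq n]

lemma entrywiseL1_mul_doublyStochastic_le (A : Matrix m n ℝ) {M : Matrix n n ℝ}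
    (hM : M ∈ doublyStochastic ℝ n) : entrywiseL1 (A * M) ≤ entrywiseL1 A := by
  calc entrywiseL1 (A * M) ≤ ∑ i, ∑ k, ∑ j, |A i j| * M j k := by
        refine Finset.sum_le_sum fun i _ => Finset.sum_le_sum fun k _ => ?_
        refine (Finset.abs_sum_le_sum_abs _ _).trans_eq ?_
        simp only [abs_mul, abs_of_nonneg (nonneg_of_mem_doublyStochastic hM)]
    _ = entrywiseL1 A := by
        refine Finset.sum_congr rfl fun i _ => ?_
        rw [Finset.sum_comm]
        simp only [← Finset.mul_sum, sum_row_of_mem_doublyStochastic hM, mul_one]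

lemma entrywiseL1_doublyStochastic_mul_le (A : Matrix n m ℝ) {M : Matrix n n ℝ}
    (hM : M ∈ doublyStochastic ℝ n) : entrywiseL1 (M * A) ≤ entrywiseL1 A := by
  rw [← entrywiseL1_transpose, transpose_mul, ← entrywiseL1_transpose A]
  exact entrywiseL1_mul_doublyStochastic_le _ (transpose_mem_doublyStochastic_iff.2 hM)

lemma entrywiseL1_mul_sub_mul_le {X Y Z W : Matrix n n ℝ} (hY : Y ∈ doublyStochastic ℝ n)
    (hZ : Z ∈ doublyStochastic ℝ n) :
    entrywiseL1 (X * Z - Y * W) ≤ entrywiseL1 (X - Y) + entrywiseL1 (Z - W) := by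
  have hsplit : X * Z - Y * W = (X - Y) * Z + Y * (Z - W) := by
    simp only [sub_mul, mul_sub]; abel
  rw [hsplit]
  exact (entrywiseL1_add_le _ _).trans <| add_le_add
    (entrywiseL1_mul_doublyStochastic_le _ hZ) (entrywiseL1_doublyStochastic_mul_le _ hY)

end EntrywiseL1

section DoublyStochastic

variable {n : Type*} [Fintype n] [DecidableEq n] {X Y : Matrix n n ℝ}

lemma entrywiseL1_gram_sub_le (hX : X ∈ doublyStochastic ℝ n) (hY : Y ∈ doublyStochastic ℝ n) :
    entrywiseL1 (X * Xᵀ - Y * Yᵀ) ≤ 2 * entrywiseL1 (X - Y) := by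
  have h := entrywiseL1_mul_sub_mul_le (X := X) (W := Yᵀ) hY
    (transpose_mem_doublyStochastic_iff.2 hX)
  rwa [← transpose_sub, entrywiseL1_transpose, ← two_mul] at h

lemma abs_trace_sq_sub_le (hX : X ∈ doublyStochastic ℝ n) (hY : Y ∈ doublyStochastic ℝ n) :
    |(X ^ 2).trace - (Y ^ 2).trace| ≤ 2 * entrywiseL1 (X - Y) := by
  rw [← trace_sub, sq, sq, two_mul]
  exact (abs_trace_le_entrywiseL1 _).trans (entrywiseL1_mul_sub_mul_le hY hX)

lemma abs_sub_le_six_mul_entrywiseL1 (hX : X ∈ doublyStochastic ℝ n)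
    (hY : Y ∈ doublyStochastic ℝ n) :
    |((X * Xᵀ).trace - ((X * Xᵀ) ^ 2).trace) - ((Y * Yᵀ).trace - ((Y * Yᵀ) ^ 2).trace)|
      ≤ 6 * entrywiseL1 (X - Y) := by
  have hgram {Z : Matrix n n ℝ} (hZ : Z ∈ doublyStochastic ℝ n) :
      Z * Zᵀ ∈ doublyStochastic ℝ n :=
    mul_mem hZ (transpose_mem_doublyStochastic_iff.2 hZ)
  have hgram_sub := entrywiseL1_gram_sub_le hX hY
  have htrace : |(X * Xᵀ).trace - (Y * Yᵀ).trace| ≤ 2 * entrywiseL1 (X - Y) := by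
    rw [← trace_sub]
    exact (abs_trace_le_entrywiseL1 _).trans hgram_sub
  have htrace_sq := abs_trace_sq_sub_le (hgram hX) (hgram hY)
  calc _ ≤ |(X * Xᵀ).trace - (Y * Yᵀ).trace|
          + |((X * Xᵀ) ^ 2).trace - ((Y * Yᵀ) ^ 2).trace| := by
        rw [sub_sub_sub_comm]; exact abs_sub _ _
    _ ≤ 6 * entrywiseL1 (X - Y) := by linarith

end DoublyStochastic

lemma sum_norm_sq_row_of_mem_unitaryGroup {𝕜 n : Type*} [RCLike 𝕜] [Fintype n] [DecidableEq n]
    {U : Matrix n n 𝕜} (hU : U ∈ unitaryGroup n 𝕜) (i : n) : ∑ j, ‖U i j‖ ^ 2 = 1 := by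
  have h := congrFun (congrFun (mem_unitaryGroup_iff.1 hU) i) i
  simp only [mul_apply, star_apply, RCLike.star_def, RCLike.mul_conj, one_apply_eq] at h
  exact_mod_cast h

lemma sum_norm_sq_col_of_mem_unitaryGroup {𝕜 n : Type*} [RCLike 𝕜] [Fintype n] [DecidableEq n]
    {U : Matrix n n 𝕜} (hU : U ∈ unitaryGroup n 𝕜) (j : n) : ∑ i, ‖U i j‖ ^ 2 = 1 := by
  simpa [star_apply] using sum_norm_sq_row_of_mem_unitaryGroup (Unitary.star_mem hU) j

lemma xMat_mem_doublyStochastic {d : ℕ} {U : Matrix (Fin d) (Fin d) ℂ}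
    (hU : U ∈ unitaryGroup (Fin d) ℂ) : xMat U ∈ doublyStochastic ℝ (Fin d) :=
  mem_doublyStochastic_iff_sum.2 ⟨fun _ _ => sq_nonneg _,
    sum_norm_sq_row_of_mem_unitaryGroup hU, sum_norm_sq_col_of_mem_unitaryGroup hU⟩

lemma abs_norm_sq_sub_norm_sq_le {E : Type*} [SeminormedAddCommGroup E] {a b : E}
    (ha : ‖a‖ ≤ 1) (hb : ‖b‖ ≤ 1) : |‖a‖ ^ 2 - ‖b‖ ^ 2| ≤ 2 * ‖a - b‖ := by
  rw [sq_sub_sq, abs_mul, abs_of_nonneg (add_nonneg (norm_nonneg a) (norm_nonneg b))]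
  exact mul_le_mul (by linarith) (abs_norm_sub_norm_le a b) (abs_nonneg _) zero_le_two

lemma entrywiseL1_xMat_sub_le {d : ℕ} {U V : Matrix (Fin d) (Fin d) ℂ}
    (hU : U ∈ unitaryGroup (Fin d) ℂ) (hV : V ∈ unitaryGroup (Fin d) ℂ) :
    entrywiseL1 (xMat U - xMat V) ≤ 2 * ∑ i, ∑ j, ‖(U - V) i j‖ := by
  simp only [entrywiseL1, Finset.mul_sum]
  gcongr with i _ j _
  exact abs_norm_sq_sub_norm_sq_le (entry_norm_bound_of_unitary hU i j)
    (entry_norm_bound_of_unitary hV i j)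

lemma frobNorm_eq_sqrt_sum_norm_sq {d : ℕ} (A : Matrix (Fin d) (Fin d) ℂ) :
    frobNorm A = √(∑ i, ∑ j, ‖A i j‖ ^ 2) := by
  rw [frobNorm, trace, Finset.sum_comm]
  congr 1
  simp only [diag_apply, mul_apply, conjTranspose_apply, RCLike.star_def, Complex.conj_mul']
  norm_cast

lemma sum_norm_le_mul_frobNorm {d : ℕ} (A : Matrix (Fin d) (Fin d) ℂ) :
    ∑ i, ∑ j, ‖A i j‖ ≤ d * frobNorm A := by
  have h := Real.sum_mul_le_sqrt_mul_sqrt Finset.univ (fun p : Fin d × Fin d => ‖A p.1 p.2‖) 1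
  rw [frobNorm_eq_sqrt_sum_norm_sq]
  simpa [Fintype.sum_prod_type, mul_comm (d : ℝ)] using h

theorem cgpDeph_lipschitz_general {d : ℕ}
    (U V : Matrix (Fin d) (Fin d) ℂ)
    (hU : U ∈ Matrix.unitaryGroup (Fin d) ℂ)
    (hV : V ∈ Matrix.unitaryGroup (Fin d) ℂ) :
    |cgpDeph U - cgpDeph V| ≤ 160 * ((d : ℝ) / ((d : ℝ) - 1)) * frobNorm (U - V) := by
  rcases Nat.eq_zero_or_pos d with rfl | hd
  · simp [Subsingleton.elim U V]
  have hd1 : (0 : ℝ) ≤ d - 1 := sub_nonneg.2 (Nat.one_le_cast.2 hd)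
  have hc : (0 : ℝ) ≤ 4 / (d - 1) := div_nonneg zero_le_four hd1
  have hfrob : 0 ≤ frobNorm (U - V) := Real.sqrt_nonneg _
  calc |cgpDeph U - cgpDeph V|
      = 4 / (d - 1) * |((xMat U * (xMat U)ᵀ).trace - ((xMat U * (xMat U)ᵀ) ^ 2).trace)
          - ((xMat V * (xMat V)ᵀ).trace - ((xMat V * (xMat V)ᵀ) ^ 2).trace)| := by
        rw [cgpDeph, cgpDeph, ← mul_sub, abs_mul, abs_of_nonneg hc]
    _ ≤ 4 / (d - 1) * (6 * (2 * (d * frobNorm (U - V)))) := by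
        grw [abs_sub_le_six_mul_entrywiseL1 (xMat_mem_doublyStochastic hU)
          (xMat_mem_doublyStochastic hV), entrywiseL1_xMat_sub_le hU hV,
          sum_norm_le_mul_frobNorm]
    _ = 48 * (d / (d - 1)) * frobNorm (U - V) := by ring
    _ ≤ 160 * (d / (d - 1)) * frobNorm (U - V) := by gcongr; norm_num

/-- **Lipschitz continuity of the dephasing CGP on the unitary group.**
For `d ≥ 2` and all `d × d` unitaries `U`, `V`,
`|f(U) − f(V)| ≤ 160 (d/(d−1)) ‖U − V‖_F`, where
`f(U) = (4/(d−1)) (Tr(X_U X_Uᵀ) − Tr((X_U X_Uᵀ)²))`. -/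
theorem cgpDeph_lipschitz {d : ℕ} (hd : 2 ≤ d)
    (U V : Matrix (Fin d) (Fin d) ℂ)
    (hU : U ∈ Matrix.unitaryGroup (Fin d) ℂ)
    (hV : V ∈ Matrix.unitaryGroup (Fin d) ℂ) :
    |cgpDeph U - cgpDeph V| ≤ 160 * ((d : ℝ) / ((d : ℝ) - 1)) * frobNorm (U - V) :=
  cgpDeph_lipschitz_general U V hU hV
end
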